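/- The group G has a cubic isoperimetric function: there exists a constant C > 0 such that for every word w in the free group F on {θ1, θ2, a, k} whose image in G is trivial, w is equal in F to a product of at most C·|w|³ + C elements, each of the form x⁻¹·r^{±1}·x where x ∈ F and r is one of the four defining relators. -/

import Mathlib

/-- The four generators θ₁, θ₂, a, k of the free group `F` on four letters. -/
def theta1 : FreeGroup (Fin 4) := FreeGroup.of 0
def theta2 : FreeGroup (Fin 4) := FreeGroup.of 1
def aF : FreeGroup (Fin 4) := FreeGroup.of 2
def kF : FreeGroup (Fin 4) := FreeGroup.of 3

/-- The four defining relators θᵢ⁻¹aθᵢa⁻¹ and θᵢ⁻¹kθᵢa⁻¹k⁻¹, i = 1,2. -/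
def rels : Set (FreeGroup (Fin 4)) :=
  {theta1⁻¹ * aF * theta1 * aF⁻¹, theta2⁻¹ * aF * theta2 * aF⁻¹,
   theta1⁻¹ * kF * theta1 * aF⁻¹ * kF⁻¹, theta2⁻¹ * kF * theta2 * aF⁻¹ * kF⁻¹}

/-- The group `G = ⟨θ₁, θ₂, a, k ∣ aᶿⁱ = a, kᶿⁱ = ka⟩`. -/
abbrev G : Type := PresentedGroup rels

/-- The quotient map `F → G`. -/
def π : FreeGroup (Fin 4) →* G := PresentedGroup.mk rels

/-!
Read a word `w` of length `m` from left to right, keeping the prefix read so far equal, up to a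
controlled area, to `T · u` with `T` a word in the `θᵢ` and `u` a word in `a, k`. A letter
`a^{±1}` or `k^{±1}` is appended to `u`. A letter `θᵢ^{±1}` is moved to the left across `u`, at the
cost of at most two relators per letter of `u`; this applies the substitution `k ↦ k a^{±1}` to `u`,
which lengthens `u` by its number of `k`-letters but does not change that number, itself at most
`m`. Hence `|u| ≤ m²` throughout and the total area is at most `2m³`. Finally, `T · u = 1` in `G`
forces `T = u = 1` in `F`, as one sees in the semidirect product `F(a, k) ⋊ F(θ₁, θ₂)`, a
quotient of `G`.
-/

open FreeGroup (of mk)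

section Area

variable {H : Type*} [Group H] {R : Set H}

def AreaLE (R : Set H) (n : ℕ) (g : H) : Prop :=
  ∃ L : List H, L.prod = g ∧ L.length ≤ n ∧
    ∀ h ∈ L, ∃ x : H, ∃ r ∈ R, h = x⁻¹ * r * x ∨ h = x⁻¹ * r⁻¹ * x

theorem areaLE_one : AreaLE R 0 1 := ⟨[], rfl, le_rfl, by simp⟩

theorem areaLE_of_mem {r : H} (hr : r ∈ R) : AreaLE R 1 r :=
  ⟨[r], by simp, le_rfl, by simpa using ⟨1, r, hr, by simp⟩⟩

namespace AreaLE

variable {m n : ℕ} {g h : H}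

theorem mono (hg : AreaLE R m g) (hmn : m ≤ n) : AreaLE R n g :=
  let ⟨L, hL, hlen, hmem⟩ := hg
  ⟨L, hL, hlen.trans hmn, hmem⟩

theorem mul (hg : AreaLE R m g) (hh : AreaLE R n h) : AreaLE R (m + n) (g * h) := by
  obtain ⟨L, rfl, hL, hLmem⟩ := hg
  obtain ⟨M, rfl, hM, hMmem⟩ := hh
  refine ⟨L ++ M, List.prod_append, by simpa using add_le_add hL hM, ?_⟩
  simpa [or_imp, forall_and] using ⟨hLmem, hMmem⟩

theorem inv (hg : AreaLE R n g) : AreaLE R n g⁻¹ := by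
  obtain ⟨L, rfl, hL, hLmem⟩ := hg
  refine ⟨(L.map (·⁻¹)).reverse, (List.prod_inv_reverse L).symm, by simpa using hL, ?_⟩
  simp only [List.mem_reverse, List.mem_map, forall_exists_index, and_imp]
  rintro _ h hh rfl
  obtain ⟨x, r, hr, rfl | rfl⟩ := hLmem h hh
  exacts [⟨x, r, hr, Or.inr (by group)⟩, ⟨x, r, hr, Or.inl (by group)⟩]

theorem conj (hg : AreaLE R n g) (y : H) : AreaLE R n (y * g * y⁻¹) := by
  obtain ⟨L, rfl, hL, hLmem⟩ := hg
  refine ⟨L.map (MulAut.conj y), (map_list_prod (MulAut.conj y) L).symm, by simpa using hL, ?_⟩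
  simp only [List.mem_map, forall_exists_index, and_imp]
  rintro _ h hh rfl
  obtain ⟨x, r, hr, rfl | rfl⟩ := hLmem h hh
  exacts [⟨x * y⁻¹, r, hr, Or.inl (by simp only [MulAut.conj_apply]; group)⟩, ⟨x * y⁻¹, r, hr, Or.inr (by simp only [MulAut.conj_apply]; group)⟩]

theorem mem_normalClosure (hg : AreaLE R n g) : g ∈ Subgroup.normalClosure R := by
  obtain ⟨L, rfl, -, hLmem⟩ := hg
  refine list_prod_mem fun h hh => ?_
  have hN := Subgroup.normalClosure_normal (s := R)
  obtain ⟨x, r, hr, rfl | rfl⟩ := hLmem h hh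
  · simpa using hN.conj_mem r (Subgroup.subset_normalClosure hr) x⁻¹
  · simpa using hN.conj_mem r⁻¹ (inv_mem (Subgroup.subset_normalClosure hr)) x⁻¹

end AreaLE

theorem areaLE_mul_inv_mk {α : Type*} (f g : FreeGroup α →* H) {n : ℕ}
    (hfg : ∀ a, AreaLE R n (f (of a) * (g (of a))⁻¹))
    (x : List (α × Bool)) :
    AreaLE R (n * x.length) (f (mk x) * (g (mk x))⁻¹) := by
  induction x with
  | nil => simpa [← FreeGroup.one_eq_mk] using (areaLE_one : AreaLE R 0 1)
  | cons p x ih =>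
    obtain ⟨a, s⟩ := p
    have hp : AreaLE R n (f (mk [(a, s)]) * (g (mk [(a, s)]))⁻¹) := by
      cases s
      · have hinv : mk [(a, false)] = (of a)⁻¹ := by
          rw [FreeGroup.of, FreeGroup.inv_mk]; rfl
        convert (hfg a).inv.conj (f (of a))⁻¹ using 1
        simp only [hinv, map_inv]
        group
      · exact hfg a
    rw [List.length_cons, mul_add_one, add_comm, show (a, s) :: x = [(a, s)] ++ x from rfl,
      ← FreeGroup.mul_mk]
    convert hp.mul (ih.conj (g (mk [(a, s)]))) using 1
    simp only [map_mul]
    group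

end Area

open SemidirectProduct (inl inr rightHom)

namespace CubicIsoperimetric

-- Words in `θ₁, θ₂` and words in `a, k` are both written over the alphabet `Bool`:
-- `false` stands for `θ₁` and `a`, `true` for `θ₂` and `k`.
def thetaHom : FreeGroup Bool →* FreeGroup (Fin 4) := FreeGroup.map fun c => cond c 1 0

def akHom : FreeGroup Bool →* FreeGroup (Fin 4) := FreeGroup.map fun b => cond b 3 2

-- In `G`, conjugation `y ↦ θᵢ⁻¹ y θᵢ` acts on `⟨a, k⟩` as `shear true : k ↦ k a` and
-- `y ↦ θᵢ y θᵢ⁻¹` as `shear false : k ↦ k a⁻¹`, both fixing `a`.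
def shearLetter (e : Bool) : Bool × Bool → List (Bool × Bool)
  | (false, s) => [(false, s)]
  | (true, true) => [(true, true), (false, e)]
  | (true, false) => [(false, !e), (true, false)]

def shear (e : Bool) : FreeGroup Bool →* FreeGroup Bool :=
  FreeGroup.lift fun b => mk (shearLetter e (b, true))

@[simp] theorem shear_of_false (e : Bool) : shear e (of false) = of false := rfl

@[simp] theorem shear_of_true (e : Bool) :
    shear e (of true) = of true * cond e (of false) (of false)⁻¹ := by
  cases e <;> rfl

def shearWord (e : Bool) (x : List (Bool × Bool)) : List (Bool × Bool) :=
  x.flatMap (shearLetter e)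

def kCount (x : List (Bool × Bool)) : ℕ := x.countP (·.1)

theorem shear_mk (e : Bool) (x : List (Bool × Bool)) :
    shear e (mk x) = mk (shearWord e x) := by
  induction x with
  | nil => rfl
  | cons p x ih =>
    have hp : shear e (mk [p]) = mk (shearLetter e p) := by
      obtain ⟨_ | _, _ | _⟩ := p <;> cases e <;> rfl
    rw [shearWord, List.flatMap_cons, ← FreeGroup.mul_mk, ← shearWord, ← ih, ← hp, ← map_mul,
      FreeGroup.mul_mk, List.singleton_append]

theorem length_shearWord (e : Bool) (x : List (Bool × Bool)) :
    (shearWord e x).length = x.length + kCount x := by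
  induction x with
  | nil => rfl
  | cons p x ih =>
    obtain ⟨_ | _, _ | _⟩ := p <;>
      simp [shearWord, kCount, shearLetter] at ih ⊢ <;> omega

theorem kCount_shearWord (e : Bool) (x : List (Bool × Bool)) :
    kCount (shearWord e x) = kCount x := by
  induction x with
  | nil => rfl
  | cons p x ih =>
    obtain ⟨_ | _, _ | _⟩ := p <;>
      simp [shearWord, kCount, shearLetter] at ih ⊢ <;> omega

theorem shear_comp_shear_not (e : Bool) : (shear e).comp (shear !e) = MonoidHom.id _ := by
  ext b
  obtain _ | _ := b <;> cases e <;> simp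

theorem areaLE_conj_akHom_of {θ : FreeGroup (Fin 4)} (hA : θ⁻¹ * aF * θ * aF⁻¹ ∈ rels)
    (hK : θ⁻¹ * kF * θ * aF⁻¹ * kF⁻¹ ∈ rels) (s b : Bool) :
    AreaLE rels 2
      ((cond s θ θ⁻¹)⁻¹ * akHom (of b) * cond s θ θ⁻¹ * (akHom (shear s (of b)))⁻¹) := by
  have hA1 := areaLE_of_mem hA
  have hK1 := areaLE_of_mem hK
  cases s <;> cases b <;>
    simp only [shear_of_false, shear_of_true, akHom, cond, map_mul, map_inv, FreeGroup.map.of]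
  · convert (hA1.inv.conj θ).mono one_le_two using 1
    simp only [aF]; group
  · convert hK1.inv.conj θ |>.mul (hA1.conj (kF * θ * aF⁻¹)) using 1
    simp only [aF, kF]; group
  · exact hA1.mono one_le_two
  · convert hK1.mono one_le_two using 1
    simp only [aF, kF]; group

theorem areaLE_akHom_mul_thetaHom (c s : Bool) (x : List (Bool × Bool)) :
    AreaLE rels (2 * x.length) (akHom (mk x) * thetaHom (mk [(c, s)]) *
      (thetaHom (mk [(c, s)]) * akHom (mk (shearWord s x)))⁻¹) := by
  set θ := thetaHom (of c)
  have hA : θ⁻¹ * aF * θ * aF⁻¹ ∈ rels := by cases c <;> simp [θ, rels, thetaHom, theta1, theta2]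
  have hK : θ⁻¹ * kF * θ * aF⁻¹ * kF⁻¹ ∈ rels := by
    cases c <;> simp [θ, rels, thetaHom, theta1, theta2]
  set t := thetaHom (mk [(c, s)])
  have ht : t = cond s θ θ⁻¹ := by cases s <;> rfl
  have hconj := areaLE_mul_inv_mk ((MulAut.conj t⁻¹).toMonoidHom.comp akHom)
    (akHom.comp (shear s)) (fun b => by simpa [ht] using areaLE_conj_akHom_of hA hK s b) x
  convert hconj.conj t using 1
  simp only [MonoidHom.coe_comp, Function.comp_apply, MulEquiv.toMonoidHom_eq_coe,
    MonoidHom.coe_coe, MulAut.conj_apply, shear_mk]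
  group

def CloseToNormalForm (m : ℕ) (w : FreeGroup (Fin 4)) : Prop :=
  ∃ (t : FreeGroup Bool) (x : List (Bool × Bool)),
    AreaLE rels (2 * m ^ 3) (w * (thetaHom t * akHom (mk x))⁻¹) ∧
      x.length ≤ m ^ 2 ∧ kCount x ≤ m

namespace CloseToNormalForm

variable {m : ℕ} {w : FreeGroup (Fin 4)}

theorem mul_theta (h : CloseToNormalForm m w) (c s : Bool) :
    CloseToNormalForm (m + 1) (w * thetaHom (mk [(c, s)])) := by
  obtain ⟨t, x, hw, hx, hk⟩ := h
  refine ⟨t * mk [(c, s)], shearWord s x, ?_, ?_, ?_⟩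
  · have hcost : 2 * m ^ 3 + 2 * x.length ≤ 2 * (m + 1) ^ 3 := by nlinarith
    convert (hw.mul ((areaLE_akHom_mul_thetaHom c s x).conj (thetaHom t))).mono hcost using 1
    simp only [map_mul]
    group
  · rw [length_shearWord]; nlinarith
  · rw [kCount_shearWord]; omega

theorem mul_ak (h : CloseToNormalForm m w) (b s : Bool) :
    CloseToNormalForm (m + 1) (w * akHom (mk [(b, s)])) := by
  obtain ⟨t, x, hw, hx, hk⟩ := h
  refine ⟨t, x ++ [(b, s)], ?_, ?_, ?_⟩
  · have hcost : 2 * m ^ 3 ≤ 2 * (m + 1) ^ 3 := by gcongr; omega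
    convert hw.mono hcost using 1
    simp only [← FreeGroup.mul_mk, map_mul]
    group
  · rw [List.length_append, List.length_singleton]; nlinarith
  · have : kCount [(b, s)] ≤ 1 := by cases b <;> cases s <;> decide
    rw [kCount, List.countP_append, ← kCount, ← kCount]; omega

end CloseToNormalForm

theorem mk_singleton_eq_thetaHom_or_akHom (p : Fin 4 × Bool) :
    (∃ c, mk [p] = thetaHom (mk [(c, p.2)])) ∨ ∃ b, mk [p] = akHom (mk [(b, p.2)]) := by
  obtain ⟨i, s⟩ := p
  fin_cases i
  exacts [Or.inl ⟨false, rfl⟩, Or.inl ⟨true, rfl⟩, Or.inr ⟨false, rfl⟩, Or.inr ⟨true, rfl⟩]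

theorem closeToNormalForm_mk (ℓ : List (Fin 4 × Bool)) : CloseToNormalForm ℓ.length (mk ℓ) := by
  induction ℓ using List.reverseRecOn with
  | nil => exact ⟨1, [], by simpa [← FreeGroup.one_eq_mk] using areaLE_one, le_rfl, le_rfl⟩
  | append_singleton ℓ p ih =>
    rw [List.length_append, List.length_singleton, ← FreeGroup.mul_mk]
    obtain ⟨c, hc⟩ | ⟨b, hb⟩ := mk_singleton_eq_thetaHom_or_akHom p
    · exact hc ▸ ih.mul_theta c p.2
    · exact hb ▸ ih.mul_ak b p.2

-- Each `θᵢ` acts by `shear false`, so that `θᵢ⁻¹ k θᵢ = shear true k = k a` as in `G`.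
def shearAut : MulAut (FreeGroup Bool) :=
  (shear false).toMulEquiv (shear true) (shear_comp_shear_not true) (shear_comp_shear_not false)

def shearAction : FreeGroup Bool →* MulAut (FreeGroup Bool) := FreeGroup.lift fun _ => shearAut

abbrev Model : Type := FreeGroup Bool ⋊[shearAction] FreeGroup Bool

def modelGen : Fin 4 → Model := ![inr (of false), inr (of true), inl (of false), inl (of true)]

theorem lift_modelGen_comp_thetaHom : (FreeGroup.lift modelGen).comp thetaHom = inr := by
  refine FreeGroup.ext_hom _ _ fun c => ?_
  cases c <;> rfl

theorem lift_modelGen_comp_akHom : (FreeGroup.lift modelGen).comp akHom = inl := by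
  refine FreeGroup.ext_hom _ _ fun b => ?_
  cases b <;> rfl

theorem inr_of_inv_mul_inl_mul_inr_of (c : Bool) (y : FreeGroup Bool) :
    (inr (of c) : Model)⁻¹ * inl y * inr (of c) = inl (shear true y) := by
  rw [← map_inv, ← SemidirectProduct.inl_aut_inv]
  rfl

theorem lift_modelGen_rels : ∀ r ∈ rels, FreeGroup.lift modelGen r = 1 := by
  have hA (c : Bool) : (inr (of c) : Model)⁻¹ * inl (of false) * inr (of c) *
      (inl (of false))⁻¹ = 1 := by
    rw [inr_of_inv_mul_inl_mul_inr_of, shear_of_false, mul_inv_cancel]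
  have hK (c : Bool) : (inr (of c) : Model)⁻¹ * inl (of true) * inr (of c) *
      (inl (of false))⁻¹ * (inl (of true))⁻¹ = 1 := by
    rw [inr_of_inv_mul_inl_mul_inr_of, shear_of_true, ← map_inv, ← map_inv, ← map_mul, ← map_mul]
    simp
  simp only [rels, Set.mem_insert_iff, Set.mem_singleton_iff, forall_eq_or_imp, forall_eq]
  simp [theta1, theta2, aF, kF, modelGen, hA, hK]

theorem thetaHom_mul_akHom_eq_one {t y : FreeGroup Bool} (h : π (thetaHom t * akHom y) = 1) :
    thetaHom t * akHom y = 1 := by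
  have hmodel : (inr t : Model) * inl y = 1 := by
    rw [← lift_modelGen_comp_thetaHom, ← lift_modelGen_comp_akHom, MonoidHom.comp_apply,
      MonoidHom.comp_apply, ← map_mul]
    exact PresentedGroup.to_group_eq_one_of_mem_closure lift_modelGen_rels _
      (PresentedGroup.mk_eq_one_iff.mp h)
  have ht : t = 1 := by simpa using congrArg rightHom hmodel
  have hy : y = 1 := SemidirectProduct.inl_injective (by simpa [ht] using hmodel)
  rw [ht, hy, map_one, map_one, one_mul]

end CubicIsoperimetric

open CubicIsoperimetric

theorem cubic_isoperimetric_function :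
    ∃ C : ℕ, 0 < C ∧
      ∀ w : FreeGroup (Fin 4), π w = 1 →
        ∃ L : List (FreeGroup (Fin 4)),
          L.prod = w ∧
          L.length ≤ C * (FreeGroup.norm w) ^ 3 + C ∧
          ∀ g ∈ L, ∃ x : FreeGroup (Fin 4), ∃ r ∈ rels,
            g = x⁻¹ * r * x ∨ g = x⁻¹ * r⁻¹ * x := by
  refine ⟨2, two_pos, fun w hw => ?_⟩
  obtain ⟨t, x, harea, -, -⟩ := closeToNormalForm_mk w.toWord
  rw [FreeGroup.mk_toWord] at harea
  have hnf : thetaHom t * akHom (mk x) = 1 := by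
    apply thetaHom_mul_akHom_eq_one
    have h : π (w * (thetaHom t * akHom (mk x))⁻¹) = 1 :=
      PresentedGroup.mk_eq_one_iff.mpr harea.mem_normalClosure
    rwa [map_mul, map_inv, hw, one_mul, inv_eq_one] at h
  rw [hnf, inv_one, mul_one] at harea
  exact harea.mono (Nat.le_add_right _ _)
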